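/- Let R be a countable Borel equivalence relation on X and A an R-field of Borel graphs over X with an orientation A^{1+} admitting a saturating Borel section s : X → A^{1+} defined on all of X, and such that the R_{A⁰}-saturations of o(s(X)) and of t(s(X)) form an R-invariant Borel partition of the vertex space A⁰ into two pieces. Then every fiber A_x is connected if and only if R is the smallest equivalence relation containing Stab_R(o∘s) and Stab_R(t∘s). -/

import Mathlib

open Set

universe u

section Relations

variable {X : Type u} [MeasurableSpace X]

/-- A countable Borel equivalence relation on `X` : a Borel subset of `X × X` which is an
equivalence relation all of whose classes are countable. -/
def IsCBER (R : Set (X × X)) : Prop :=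
  MeasurableSet R ∧ (∀ x, (x, x) ∈ R) ∧ (∀ ⦃x y⦄, (x, y) ∈ R → (y, x) ∈ R) ∧
    (∀ ⦃x y z⦄, (x, y) ∈ R → (y, z) ∈ R → (x, z) ∈ R) ∧
    ∀ x, {y | (x, y) ∈ R}.Countable

/-- A subrelation of `R` defined on the Borel set `A` : a Borel equivalence relation on `A`
contained in `R`. -/
def IsSubrelOn (R S : Set (X × X)) (A : Set X) : Prop :=
  MeasurableSet A ∧ MeasurableSet S ∧ S ⊆ R ∧ S ⊆ A ×ˢ A ∧
    (∀ x ∈ A, (x, x) ∈ S) ∧ (∀ ⦃x y⦄, (x, y) ∈ S → (y, x) ∈ S) ∧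
    ∀ ⦃x y z⦄, (x, y) ∈ S → (y, z) ∈ S → (x, z) ∈ S

/-- A subrelation of `R`, defined on some Borel subset of `X`. -/
def IsSubrel (R S : Set (X × X)) : Prop :=
  ∃ A : Set X, IsSubrelOn R S A

/-- Restriction `R|_A = R ∩ (A × A)`. -/
def Restrict (R : Set (X × X)) (A : Set X) : Set (X × X) := R ∩ A ×ˢ A

/-- The `R`-saturation of a set `A`. -/
def Saturation (R : Set (X × X)) (A : Set X) : Set X := {x | ∃ a ∈ A, (a, x) ∈ R}

/-- A Borel set meeting every class of `R` : a complete domain. -/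
def IsCompleteDomain (R : Set (X × X)) (D : Set X) : Prop :=
  MeasurableSet D ∧ (∀ d ∈ D, (d, d) ∈ R) ∧ ∀ x, (x, x) ∈ R → ∃ d ∈ D, (x, d) ∈ R

/-- A Borel set meeting every class of `R` in exactly one point : a fundamental domain. -/
def IsFundamentalDomain (R : Set (X × X)) (D : Set X) : Prop :=
  MeasurableSet D ∧ (∀ d ∈ D, (d, d) ∈ R) ∧ ∀ x, (x, x) ∈ R → ∃! d, d ∈ D ∧ (x, d) ∈ R

/-- A Borel equivalence relation is smooth if it admits a fundamental domain. -/
def IsSmoothRel (R : Set (X × X)) : Prop := ∃ D, IsFundamentalDomain R D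

/-- A graphing of `R` : a symmetric irreflexive Borel subset of `R` generating `R`. -/
def IsGraphing (R G : Set (X × X)) : Prop :=
  MeasurableSet G ∧ G ⊆ R ∧ (∀ ⦃x y⦄, (x, y) ∈ G → (y, x) ∈ G) ∧
    (∀ x, (x, x) ∉ G) ∧
    ∀ p ∈ R, Relation.ReflTransGen (fun a b => (a, b) ∈ G) p.1 p.2

/-- The (simple) graph given by a symmetric irreflexive set of pairs has a cycle : an injective
closed path of length at least 3. -/
def HasCycle (G : Set (X × X)) : Prop :=
  ∃ (n : ℕ) (c : ℕ → X), 3 ≤ n ∧ (∀ k < n, (c k, c ((k + 1) % n)) ∈ G) ∧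
    ∀ k < n, ∀ l < n, c k = c l → k = l

/-- A treeing of `R` : an acyclic graphing. -/
def IsTreeing (R G : Set (X × X)) : Prop := IsGraphing R G ∧ ¬ HasCycle G

/-- `R` is treeable if it admits a treeing. -/
def IsTreeable (R : Set (X × X)) : Prop := ∃ G, IsTreeing R G

/-- `φ` is an element of the full pseudogroup `[[R]]` with (Borel) domain `A` :
an injective Borel map on `A` whose graph is contained in `R` (its image `φ '' A` is then
automatically Borel and `φ` is a Borel isomorphism of `A` onto `φ '' A`). -/
def MemPseudoGroup (R : Set (X × X)) (A : Set X) (φ : X → X) : Prop :=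
  MeasurableSet A ∧ Measurable (A.restrict φ) ∧ Set.InjOn φ A ∧
    ∀ x ∈ A, (x, φ x) ∈ R

/-- Conjugation `φ⁻¹ S φ` of a subrelation `S` (defined on `φ '' A`) by `φ : A → φ '' A`. -/
def Conj (S : Set (X × X)) (A : Set X) (φ : X → X) : Set (X × X) :=
  {p | p.1 ∈ A ∧ p.2 ∈ A ∧ (φ p.1, φ p.2) ∈ S}

/-- Two subrelations of `R` are stably conjugate if they admit complete domains on which their
restrictions are conjugate by an element of the full pseudogroup of `R`. -/
def StablyConjugate (R S S' : Set (X × X)) : Prop :=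
  ∃ (D D' : Set X) (φ : X → X),
    IsCompleteDomain S D ∧ IsCompleteDomain S' D' ∧
    MemPseudoGroup R D' φ ∧ φ '' D' = D ∧
    Restrict S' D' = Conj (Restrict S D) D' φ

/-- `R` is the free product of the countable family `Rf` : the `Rf i` generate `R` and every
cyclic word with consecutive pairs in distinct factors contains a trivial pair.
(Here a word with `m` consecutive pairs is given by its `m + 1` points `x 0, …, x m`.) -/
def IsCtblFreeProduct {ι : Type*} (R : Set (X × X)) (Rf : ι → Set (X × X)) : Prop :=
  (∀ i, Rf i ⊆ R) ∧
    (∀ p ∈ R, Relation.EqvGen (fun a b => ∃ i, (a, b) ∈ Rf i) p.1 p.2) ∧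
    ∀ (m : ℕ) (x : ℕ → X) (idx : ℕ → ι),
      1 ≤ m → x m = x 0 →
      (∀ k < m, (x k, x (k + 1)) ∈ Rf (idx k)) →
      (∀ k, k + 1 < m → idx k ≠ idx (k + 1)) →
      ∃ k < m, x k = x (k + 1)

/-- A reduced word with respect to two subrelations `R1`, `R2` : a tuple of points
`x 0, …, x m` (`m ≥ 1` consecutive pairs) such that every consecutive pair is `R1`- or
`R2`-equivalent, no two successive pairs are `Rj`-equivalent for the same `j`, and
`x 0 ≠ x 1` when there is a single pair. -/
def Reduced2 (R1 R2 : Set (X × X)) (m : ℕ) (x : ℕ → X) : Prop :=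
  1 ≤ m ∧
  (∀ k < m, (x k, x (k + 1)) ∈ R1 ∨ (x k, x (k + 1)) ∈ R2) ∧
  (∀ k, k + 1 < m → ¬((x k, x (k + 1)) ∈ R1 ∧ (x (k + 1), x (k + 2)) ∈ R1)) ∧
  (∀ k, k + 1 < m → ¬((x k, x (k + 1)) ∈ R2 ∧ (x (k + 1), x (k + 2)) ∈ R2)) ∧
  (m = 1 → x 0 ≠ x 1)

/-- `R` is the free product of two subrelations `R1 ⋆ R2` : `R` is the smallest equivalence
relation containing `R1` and `R2` and the endpoints of every reduced word are distinct. -/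
def IsFreeProduct2 (R R1 R2 : Set (X × X)) : Prop :=
  R1 ⊆ R ∧ R2 ⊆ R ∧
  (∀ p ∈ R, Relation.EqvGen (fun a b => (a, b) ∈ R1 ∨ (a, b) ∈ R2) p.1 p.2) ∧
  ∀ m x, Reduced2 R1 R2 m x → x m ≠ x 0

/-- A reduced word with respect to `R1`, `R2` and a common subrelation `R3` : moreover no
consecutive pair is `R3`-equivalent as soon as there are at least two pairs. -/
def Reduced3 (R1 R2 R3 : Set (X × X)) (m : ℕ) (x : ℕ → X) : Prop :=
  Reduced2 R1 R2 m x ∧ (1 < m → ∀ k < m, (x k, x (k + 1)) ∉ R3)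

/-- `R` is the amalgamated product `R1 ⋆_{R3} R2` of `R1` and `R2` over the common
subrelation `R3`. -/
def IsAmalgam (R R1 R2 R3 : Set (X × X)) : Prop :=
  R1 ⊆ R ∧ R2 ⊆ R ∧ R3 ⊆ R1 ∧ R3 ⊆ R2 ∧
  (∀ p ∈ R, Relation.EqvGen (fun a b => (a, b) ∈ R1 ∨ (a, b) ∈ R2) p.1 p.2) ∧
  ∀ m x, Reduced3 R1 R2 R3 m x → x m ≠ x 0

end Relations

/-- An `R`-fibered space over `X` : a standard Borel space `F` with a Borel,
countable-to-one surjection `π` onto `X`, equipped with a Borel action of `R`. -/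
structure RFibSp (X : Type u) [MeasurableSpace X] (R : Set (X × X)) where
  F : Type u
  [mF : MeasurableSpace F]
  [sbF : StandardBorelSpace F]
  π : F → X
  act : X → X → F → F
  measurable_π : Measurable π
  surjective_π : Function.Surjective π
  countable_fibers : ∀ x : X, {t : F | π t = x}.Countable
  measurable_act :
    Measurable fun q : {q : (X × X) × F // q.1 ∈ R ∧ π q.2 = q.1.2} =>
      act q.1.1.1 q.1.1.2 q.1.2
  act_proj : ∀ ⦃x y : X⦄ (t : F), (x, y) ∈ R → π t = y → π (act x y t) = x
  act_id : ∀ (z : X) (t : F), π t = z → act z z t = t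
  act_comp : ∀ ⦃x y z : X⦄ (t : F), (x, y) ∈ R → (y, z) ∈ R → π t = z →
      act x y (act y z t) = act x z t

attribute [instance] RFibSp.mF RFibSp.sbF

namespace RFibSp

variable {X : Type u} [MeasurableSpace X] {R : Set (X × X)}

/-- The induced equivalence relation `R_F` on `F` : `t` and `t'` are related iff
`(π t', π t) · t = t'`. -/
def rel (E : RFibSp X R) : Set (E.F × E.F) :=
  {p | (E.π p.2, E.π p.1) ∈ R ∧ E.act (E.π p.2) (E.π p.1) p.1 = p.2}

/-- The `R_F`-saturation of a subset of `F`. -/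
def sat (E : RFibSp X R) (B : Set E.F) : Set E.F :=
  {t | ∃ b ∈ B, (b, t) ∈ E.rel}

/-- A partial section of `E` defined on the Borel set `A`. -/
def IsPartialSection (E : RFibSp X R) (A : Set X) (s : X → E.F) : Prop :=
  MeasurableSet A ∧ Measurable (A.restrict s) ∧ ∀ x ∈ A, E.π (s x) = x

/-- The stabilizer of a partial section : `x ∼ y` iff `(y, x) · s x = s y`. -/
def stab (E : RFibSp X R) (A : Set X) (s : X → E.F) : Set (X × X) :=
  {p | p.1 ∈ A ∧ p.2 ∈ A ∧ (p.2, p.1) ∈ R ∧ E.act p.2 p.1 (s p.1) = s p.2}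

/-- A partial section is saturating if the `R_F`-saturation of its image is all of `F`. -/
def IsSaturating (E : RFibSp X R) (A : Set X) (s : X → E.F) : Prop :=
  ∀ t : E.F, ∃ x ∈ A, (s x, t) ∈ E.rel

/-- Quasi-free action : the stabilizer of every partial section is smooth. -/
def IsQuasiFree (E : RFibSp X R) : Prop :=
  ∀ (A : Set X) (s : X → E.F), E.IsPartialSection A s → IsSmoothRel (E.stab A s)

/-- A morphism of `R`-fibered spaces. -/
def IsMorphism (E E' : RFibSp X R) (f : E.F → E'.F) : Prop :=
  Measurable f ∧ (∀ t, E'.π (f t) = E.π t) ∧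
    ∀ ⦃x y : X⦄ (t : E.F), (x, y) ∈ R → E.π t = y →
      f (E.act x y t) = E'.act x y (f t)

end RFibSp

/-- An `R`-field of Borel graphs over `X` : vertex and edge `R`-fibered spaces together with
origin, terminal and edge-reversal morphisms. -/
structure RGraphField (X : Type u) [MeasurableSpace X] (R : Set (X × X)) where
  V : RFibSp X R
  Edg : RFibSp X R
  o : Edg.F → V.F
  t : Edg.F → V.F
  bar : Edg.F → Edg.F
  o_mor : RFibSp.IsMorphism Edg V o
  t_mor : RFibSp.IsMorphism Edg V t
  bar_mor : RFibSp.IsMorphism Edg Edg bar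
  bar_bar : ∀ a, bar (bar a) = a
  bar_ne : ∀ a, bar a ≠ a
  o_bar : ∀ a, o (bar a) = t a

namespace RGraphField

variable {X : Type u} [MeasurableSpace X] {R : Set (X × X)}

/-- Adjacency in the fiber over `x`. -/
def Adj (G : RGraphField X R) (x : X) (v w : G.V.F) : Prop :=
  ∃ e : G.Edg.F, G.Edg.π e = x ∧ G.o e = v ∧ G.t e = w

/-- The fiber over `x` is connected. -/
def FiberConnected (G : RGraphField X R) (x : X) : Prop :=
  ∀ v w : G.V.F, G.V.π v = x → G.V.π w = x → Relation.ReflTransGen (G.Adj x) v w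

/-- The fiber over `x` contains a circuit : a reduced closed edge path of positive length. -/
def FiberHasCircuit (G : RGraphField X R) (x : X) : Prop :=
  ∃ (n : ℕ) (c : ℕ → G.Edg.F), 0 < n ∧ (∀ k < n, G.Edg.π (c k) = x) ∧
    (∀ k < n, G.t (c k) = G.o (c ((k + 1) % n))) ∧
    ∀ k < n, c ((k + 1) % n) ≠ G.bar (c k)

/-- An `R`-arboretum : every fiber is a (nonempty) tree. -/
def IsArboretum (G : RGraphField X R) : Prop :=
  ∀ x : X, G.FiberConnected x ∧ ¬ G.FiberHasCircuit x

/-- An orientation of the edge space : an `R`-invariant Borel set of edges containing exactly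
one edge of each pair `{a, ā}`. -/
def IsOrientation (G : RGraphField X R) (P : Set G.Edg.F) : Prop :=
  MeasurableSet P ∧ (∀ a : G.Edg.F, a ∈ P ↔ G.bar a ∉ P) ∧
    ∀ ⦃x y : X⦄ (a : G.Edg.F), (x, y) ∈ R → G.Edg.π a = y → a ∈ P →
      G.Edg.act x y a ∈ P

end RGraphField

/-!
Every vertex over `x` is the translate of `o (s z)` or of `t (s z)` for some `z` in the
`R`-class of `x`, never of both kinds, and two translates of the same kind coincide exactly when
their labels are related by the corresponding stabilizer. Since every edge is the translate of
some `s z` or of its reverse, walking along a path in the fiber over `x` only moves the label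
inside its class for the relation generated by the two stabilizers. Conversely, the translate of
`s z` joins the two vertices of label `z`, so stabilizer-related labels give connected vertices.
-/

theorem IsCBER.equivalence {X : Type u} [MeasurableSpace X] {R : Set (X × X)} (hR : IsCBER R) :
    Equivalence fun x y => (x, y) ∈ R :=
  ⟨hR.2.1, fun h => hR.2.2.1 h, fun h h' => hR.2.2.2.1 h h'⟩

namespace RFibSp

variable {X : Type u} [MeasurableSpace X] {R : Set (X × X)} (E : RFibSp X R)

theorem rel_equivalence (hR : Equivalence fun x y => (x, y) ∈ R) :
    Equivalence fun t t' => (t, t') ∈ E.rel where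
  refl t := ⟨hR.refl _, E.act_id _ t rfl⟩
  symm {t t'} h := by
    obtain ⟨hR', hact⟩ := h
    refine ⟨hR.symm hR', ?_⟩
    calc E.act (E.π t) (E.π t') t' = E.act (E.π t) (E.π t') (E.act (E.π t') (E.π t) t) := by
          rw [hact]
      _ = t := by rw [E.act_comp t (hR.symm hR') hR' rfl, E.act_id _ t rfl]
  trans {t t' t''} h h' := by
    refine ⟨hR.trans h'.1 h.1, ?_⟩
    rw [← E.act_comp t h'.1 h.1 rfl, h.2, h'.2]

theorem exists_mem_rel {x : X} {t : E.F} (h : (x, E.π t) ∈ R) :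
    ∃ t', E.π t' = x ∧ (t, t') ∈ E.rel := by
  have hπ : E.π (E.act x (E.π t) t) = x := E.act_proj t h rfl
  exact ⟨_, hπ, by rw [rel, mem_ofPred_eq, hπ]; exact ⟨h, rfl⟩⟩

theorem eq_of_mem_rel {t v v' : E.F} (h : (t, v) ∈ E.rel) (h' : (t, v') ∈ E.rel)
    (hπ : E.π v = E.π v') : v = v' := by
  have hv : E.act (E.π v) (E.π t) t = v := h.2
  have hv' : E.act (E.π v') (E.π t) t = v' := h'.2
  rw [← hv, ← hv', hπ]

theorem IsMorphism.map_rel {E E' : RFibSp X R} {f : E.F → E'.F} (hf : IsMorphism E E' f)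
    {t t' : E.F} (h : (t, t') ∈ E.rel) : (f t, f t') ∈ E'.rel := by
  refine ⟨by rw [hf.2.1, hf.2.1]; exact h.1, ?_⟩
  rw [hf.2.1, hf.2.1, ← hf.2.2 t h.1 rfl, h.2]

variable {E}

theorem mem_of_mem_rel {σ : X → E.F} (hσ : ∀ z, E.π (σ z) = z) {z : X} {t : E.F}
    (h : (σ z, t) ∈ E.rel) : (E.π t, z) ∈ R :=
  hσ z ▸ h.1

theorem mem_sat_range_iff {σ : X → E.F} {t : E.F} :
    t ∈ E.sat (range σ) ↔ ∃ z, (σ z, t) ∈ E.rel := by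
  simp only [sat, mem_ofPred_eq, exists_range_iff]

theorem not_mem_rel_of_disjoint_sat {σ τ : X → E.F}
    (hdisj : Disjoint (E.sat (range σ)) (E.sat (range τ))) {z z' : X} {t : E.F}
    (h : (σ z, t) ∈ E.rel) : (τ z', t) ∉ E.rel := fun h' =>
  disjoint_left.1 hdisj (mem_sat_range_iff.2 ⟨z, h⟩) (mem_sat_range_iff.2 ⟨z', h'⟩)

theorem mem_stab_univ_iff {σ : X → E.F} (hσ : ∀ z, E.π (σ z) = z) {z z' : X} :
    (z, z') ∈ E.stab univ σ ↔ (σ z, σ z') ∈ E.rel := by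
  simp only [stab, rel, mem_ofPred_eq, hσ, mem_univ, true_and]

theorem mem_stab_univ_of_mem_rel (hR : Equivalence fun x y => (x, y) ∈ R) {σ : X → E.F}
    (hσ : ∀ z, E.π (σ z) = z) {z z' : X} {t : E.F} (h : (σ z, t) ∈ E.rel)
    (h' : (σ z', t) ∈ E.rel) : (z, z') ∈ E.stab univ σ :=
  (mem_stab_univ_iff hσ).2 ((E.rel_equivalence hR).trans h ((E.rel_equivalence hR).symm h'))

end RFibSp

namespace RGraphField

variable {X : Type u} [MeasurableSpace X] {R : Set (X × X)} (G : RGraphField X R)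
  (s : X → G.Edg.F)

def EndpointStab (a b : X) : Prop :=
  (a, b) ∈ G.V.stab univ (fun z => G.o (s z)) ∨ (a, b) ∈ G.V.stab univ (fun z => G.t (s z))

-- The `R`-clause makes this relation transitive: it provides a translate of the middle origin
-- through which the two paths are concatenated.
def OriginsConnected (z z' : X) : Prop :=
  (z, z') ∈ R ∧ ∀ v v' : G.V.F, (G.o (s z), v) ∈ G.V.rel → (G.o (s z'), v') ∈ G.V.rel →
    G.V.π v = G.V.π v' → Relation.ReflTransGen (G.Adj (G.V.π v)) v v'

theorem t_bar (e : G.Edg.F) : G.t (G.bar e) = G.o e := by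
  rw [← G.o_bar (G.bar e), G.bar_bar]

instance (x : X) : Std.Symm (G.Adj x) where
  symm _ _ := fun ⟨e, hπ, ho, ht⟩ =>
    ⟨G.bar e, by rw [G.bar_mor.2.1, hπ], by rw [G.o_bar, ht], by rw [t_bar, ho]⟩

variable {G s}

theorem exists_section_endpoints_rel {P : Set G.Edg.F} (hP : G.IsOrientation P)
    (hsat : ∀ e ∈ P, ∃ x, (s x, e) ∈ G.Edg.rel) (e : G.Edg.F) :
    ∃ z, ((G.o (s z), G.o e) ∈ G.V.rel ∧ (G.t (s z), G.t e) ∈ G.V.rel) ∨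
      ((G.o (s z), G.t e) ∈ G.V.rel ∧ (G.t (s z), G.o e) ∈ G.V.rel) := by
  by_cases he : e ∈ P
  · obtain ⟨z, hz⟩ := hsat e he
    exact ⟨z, .inl ⟨G.o_mor.map_rel hz, G.t_mor.map_rel hz⟩⟩
  · obtain ⟨z, hz⟩ := hsat (G.bar e) ((hP.2.1 _).2 (by rwa [G.bar_bar]))
    refine ⟨z, .inr ⟨?_, ?_⟩⟩
    · simpa only [G.o_bar] using G.o_mor.map_rel hz
    · simpa only [G.t_bar] using G.t_mor.map_rel hz

theorem mem_of_eqvGen_endpointStab (hR : Equivalence fun x y => (x, y) ∈ R) {x y : X}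
    (h : Relation.EqvGen (G.EndpointStab s) x y) : (x, y) ∈ R :=
  hR.eqvGen_iff.1 (h.mono fun _ _ hab => hR.symm (hab.elim (·.2.2.1) (·.2.2.1)))

section

variable (hs : ∀ z, G.Edg.π (s z) = z)
include hs

theorem π_o_section (z : X) : G.V.π (G.o (s z)) = z := by rw [G.o_mor.2.1, hs]

theorem π_t_section (z : X) : G.V.π (G.t (s z)) = z := by rw [G.t_mor.2.1, hs]

theorem exists_translate_section_edge {x z : X} (h : (x, z) ∈ R) :
    ∃ e, G.Edg.π e = x ∧ (G.o (s z), G.o e) ∈ G.V.rel ∧ (G.t (s z), G.t e) ∈ G.V.rel := by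
  obtain ⟨e, he, hse⟩ := G.Edg.exists_mem_rel (t := s z) (by rwa [hs])
  exact ⟨e, he, G.o_mor.map_rel hse, G.t_mor.map_rel hse⟩

theorem exists_eqvGen_endpointStab_of_adj (hR : Equivalence fun x y => (x, y) ∈ R)
    {P : Set G.Edg.F} (hP : G.IsOrientation P) (hsat : ∀ e ∈ P, ∃ x, (s x, e) ∈ G.Edg.rel)
    (hdisj : Disjoint (G.V.sat (range fun x => G.o (s x))) (G.V.sat (range fun x => G.t (s x))))
    {x y : X} {b c : G.V.F} (hbc : G.Adj y b c)
    (hb : ∃ z, Relation.EqvGen (G.EndpointStab s) x z ∧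
      ((G.o (s z), b) ∈ G.V.rel ∨ (G.t (s z), b) ∈ G.V.rel)) :
    ∃ z, Relation.EqvGen (G.EndpointStab s) x z ∧
      ((G.o (s z), c) ∈ G.V.rel ∨ (G.t (s z), c) ∈ G.V.rel) := by
  obtain ⟨e, -, rfl, rfl⟩ := hbc
  obtain ⟨z, hxz, hzb⟩ := hb
  obtain ⟨z', ⟨ho, ht⟩ | ⟨ht, ho⟩⟩ := exists_section_endpoints_rel hP hsat e
  · refine ⟨z', hxz.trans _ _ _ (.rel _ _ (.inl ?_)), .inr ht⟩
    rcases hzb with hzb | hzb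
    · exact G.V.mem_stab_univ_of_mem_rel hR (π_o_section hs) hzb ho
    · exact absurd hzb (G.V.not_mem_rel_of_disjoint_sat hdisj ho)
  · refine ⟨z', hxz.trans _ _ _ (.rel _ _ (.inr ?_)), .inl ht⟩
    rcases hzb with hzb | hzb
    · exact absurd ho (G.V.not_mem_rel_of_disjoint_sat hdisj hzb)
    · exact G.V.mem_stab_univ_of_mem_rel hR (π_t_section hs) hzb ho

theorem eqvGen_endpointStab_of_fiberConnected (hR : Equivalence fun x y => (x, y) ∈ R)
    {P : Set G.Edg.F} (hP : G.IsOrientation P) (hsat : ∀ e ∈ P, ∃ x, (s x, e) ∈ G.Edg.rel)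
    (hdisj : Disjoint (G.V.sat (range fun x => G.o (s x))) (G.V.sat (range fun x => G.t (s x))))
    {x y : X} (hx : G.FiberConnected x) (hxy : (x, y) ∈ R) :
    Relation.EqvGen (G.EndpointStab s) x y := by
  obtain ⟨v, hv, hyv⟩ := G.V.exists_mem_rel (t := G.o (s y)) (by rwa [π_o_section hs])
  have hlabel : ∀ w, Relation.ReflTransGen (G.Adj x) (G.o (s x)) w →
      ∃ z, Relation.EqvGen (G.EndpointStab s) x z ∧
        ((G.o (s z), w) ∈ G.V.rel ∨ (G.t (s z), w) ∈ G.V.rel) := by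
    intro w hw
    induction hw with
    | refl => exact ⟨x, .refl x, .inl ((G.V.rel_equivalence hR).refl _)⟩
    | tail _ hbc ih => exact exists_eqvGen_endpointStab_of_adj hs hR hP hsat hdisj hbc ih
  obtain ⟨z, hxz, hzv | hzv⟩ := hlabel v (hx _ _ (π_o_section hs x) hv)
  · exact hxz.trans _ _ _ (.rel _ _ (.inl (G.V.mem_stab_univ_of_mem_rel hR (π_o_section hs) hzv hyv)))
  · exact absurd hzv (G.V.not_mem_rel_of_disjoint_sat hdisj hyv)

theorem originsConnected_equivalence (hR : Equivalence fun x y => (x, y) ∈ R) :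
    Equivalence (G.OriginsConnected s) where
  refl z := ⟨hR.refl z, fun _ _ hv hv' hπ => G.V.eq_of_mem_rel hv hv' hπ ▸ .refl⟩
  symm {z z'} h := by
    refine ⟨hR.symm h.1, fun v v' hv hv' hπ => ?_⟩
    have hpath := h.2 v' v hv' hv hπ.symm
    rw [← hπ] at hpath
    exact symm hpath
  trans {a b c} hab hbc := by
    refine ⟨hR.trans hab.1 hbc.1, fun v v'' hv hv'' hπ => ?_⟩
    have hvb : (G.V.π v, G.V.π (G.o (s b))) ∈ R := by
      rw [π_o_section hs]
      exact hR.trans (G.V.mem_of_mem_rel (π_o_section hs) hv) hab.1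
    obtain ⟨u, hu, hbu⟩ := G.V.exists_mem_rel hvb
    have hpath := hbc.2 u v'' hbu hv'' (hu.trans hπ)
    rw [hu] at hpath
    exact (hab.2 v u hv hbu hu.symm).trans hpath

theorem originsConnected_of_endpointStab (hR : Equivalence fun x y => (x, y) ∈ R) {z z' : X}
    (h : G.EndpointStab s z z') : G.OriginsConnected s z z' := by
  refine ⟨hR.symm (h.elim (·.2.2.1) (·.2.2.1)), fun v v' hv hv' hπ => ?_⟩
  have hrel := G.V.rel_equivalence hR
  rcases h with ho | ht
  · rw [G.V.eq_of_mem_rel hv (hrel.trans ((G.V.mem_stab_univ_iff (π_o_section hs)).1 ho) hv') hπ]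
  · obtain ⟨e, he, hoe, hte⟩ :=
      exists_translate_section_edge hs (G.V.mem_of_mem_rel (π_o_section hs) hv)
    obtain ⟨e', he', hoe', hte'⟩ :=
      exists_translate_section_edge hs (G.V.mem_of_mem_rel (π_o_section hs) hv')
    have hev : G.o e = v := G.V.eq_of_mem_rel hoe hv (by rw [G.o_mor.2.1, he])
    have hev' : G.o e' = v' := G.V.eq_of_mem_rel hoe' hv' (by rw [G.o_mor.2.1, he'])
    have hee' : G.t e = G.t e' := G.V.eq_of_mem_rel hte
      (hrel.trans ((G.V.mem_stab_univ_iff (π_t_section hs)).1 ht) hte')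
      (by rw [G.t_mor.2.1, G.t_mor.2.1, he, he', hπ])
    exact .tail (.single ⟨e, he, hev, hee'⟩) (symm ⟨e', he'.trans hπ.symm, hev', rfl⟩)

theorem exists_origin_reflTransGen_adj
    (hcover : G.V.sat (range fun x => G.o (s x)) ∪ G.V.sat (range fun x => G.t (s x)) = univ)
    (v : G.V.F) : ∃ z v₀, (G.o (s z), v₀) ∈ G.V.rel ∧ G.V.π v₀ = G.V.π v ∧
      Relation.ReflTransGen (G.Adj (G.V.π v)) v₀ v := by
  rcases hcover ▸ mem_univ v with hv | hv
  · obtain ⟨z, hz⟩ := RFibSp.mem_sat_range_iff.1 hv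
    exact ⟨z, v, hz, rfl, .refl⟩
  · obtain ⟨z, hz⟩ := RFibSp.mem_sat_range_iff.1 hv
    obtain ⟨e, he, hoe, hte⟩ :=
      exists_translate_section_edge hs (G.V.mem_of_mem_rel (π_t_section hs) hz)
    have hev : G.t e = v := G.V.eq_of_mem_rel hte hz (by rw [G.t_mor.2.1, he])
    exact ⟨z, G.o e, hoe, by rw [G.o_mor.2.1, he], .single ⟨e, he, rfl, hev⟩⟩

theorem fiberConnected_of_eqvGen_endpointStab (hR : Equivalence fun x y => (x, y) ∈ R)
    (hcover : G.V.sat (range fun x => G.o (s x)) ∪ G.V.sat (range fun x => G.t (s x)) = univ)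
    (hgen : ∀ x y, (x, y) ∈ R → Relation.EqvGen (G.EndpointStab s) x y) (x : X) :
    G.FiberConnected x := by
  rintro v w rfl hw
  obtain ⟨z, v₀, hzv, hv₀, hv⟩ := exists_origin_reflTransGen_adj hs hcover v
  obtain ⟨z', w₀, hzw, hw₀, hw₀w⟩ := exists_origin_reflTransGen_adj hs hcover w
  have hz : (G.V.π v, z) ∈ R := hv₀ ▸ G.V.mem_of_mem_rel (π_o_section hs) hzv
  have hz' : (G.V.π v, z') ∈ R := hw ▸ hw₀ ▸ G.V.mem_of_mem_rel (π_o_section hs) hzw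
  have hconn : G.OriginsConnected s z z' := (originsConnected_equivalence hs hR).eqvGen_iff.1
    ((hgen z z' (hR.trans (hR.symm hz) hz')).mono fun _ _ => originsConnected_of_endpointStab hs hR)
  have hpath := hconn.2 v₀ w₀ hzv hzw (by rw [hv₀, hw₀, hw])
  rw [hv₀] at hpath
  rw [hw] at hw₀w
  exact (symm hv).trans (hpath.trans hw₀w)

end

end RGraphField
theorem fiberConnected_iff_generated_by_stabilizers_general
    {X : Type u} [MeasurableSpace X]
    {R : Set (X × X)} (hR : IsCBER R)
    (G : RGraphField X R)
    (P : Set G.Edg.F) (hP : G.IsOrientation P)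
    (s : X → G.Edg.F) (hs : G.Edg.IsPartialSection Set.univ s)
    -- `s` is a saturating Borel section of `A^{1+}` :
    (hsat : ∀ e ∈ P, ∃ x : X, (s x, e) ∈ G.Edg.rel)
    -- the saturations of `o (s (X))` and `t (s (X))` partition the vertex space in two :
    (hdisj : Disjoint (G.V.sat (Set.range fun x => G.o (s x)))
      (G.V.sat (Set.range fun x => G.t (s x))))
    (hcover : G.V.sat (Set.range fun x => G.o (s x)) ∪
      G.V.sat (Set.range fun x => G.t (s x)) = Set.univ) :
    (∀ x : X, G.FiberConnected x) ↔
      ∀ x y : X, (x, y) ∈ R ↔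
        Relation.EqvGen (fun a b =>
          (a, b) ∈ G.V.stab Set.univ (fun z => G.o (s z)) ∨
          (a, b) ∈ G.V.stab Set.univ (fun z => G.t (s z))) x y := by
  have hR' := hR.equivalence
  have hs' : ∀ z, G.Edg.π (s z) = z := fun z => hs.2.2 z trivial
  refine ⟨fun hconn x y => ⟨G.eqvGen_endpointStab_of_fiberConnected hs' hR' hP hsat hdisj (hconn x),
    G.mem_of_eqvGen_endpointStab hR'⟩, fun hgen => ?_⟩
  exact G.fiberConnected_of_eqvGen_endpointStab hs' hR' hcover fun x y => (hgen x y).1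

/-- Connectivity of the fibers is equivalent to generation by the two vertex stabilizers. -/
theorem fiberConnected_iff_generated_by_stabilizers
    {X : Type u} [MeasurableSpace X] [StandardBorelSpace X]
    {R : Set (X × X)} (hR : IsCBER R)
    (G : RGraphField X R)
    (P : Set G.Edg.F) (hP : G.IsOrientation P)
    (s : X → G.Edg.F) (hs : G.Edg.IsPartialSection Set.univ s)
    (hsP : ∀ x, s x ∈ P)
    -- `s` is a saturating Borel section of `A^{1+}` :
    (hsat : ∀ e ∈ P, ∃ x : X, (s x, e) ∈ G.Edg.rel)
    -- the saturations of `o (s (X))` and `t (s (X))` partition the vertex space in two :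
    (hdisj : Disjoint (G.V.sat (Set.range fun x => G.o (s x)))
      (G.V.sat (Set.range fun x => G.t (s x))))
    (hcover : G.V.sat (Set.range fun x => G.o (s x)) ∪
      G.V.sat (Set.range fun x => G.t (s x)) = Set.univ) :
    (∀ x : X, G.FiberConnected x) ↔
      ∀ x y : X, (x, y) ∈ R ↔
        Relation.EqvGen (fun a b =>
          (a, b) ∈ G.V.stab Set.univ (fun z => G.o (s z)) ∨
          (a, b) ∈ G.V.stab Set.univ (fun z => G.t (s z))) x y :=
  fiberConnected_iff_generated_by_stabilizers_general hR G P hP s hs hsat hdisj hcover
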